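/- For z in the open unit disk 𝔻, let φ_z(w) = (w−z)/(1−z̄w) and let k_z(w) = √(1−|z|²)/(1−z̄w) be the normalized reproducing kernel of H². Then the Hankel operator H_{φ̄_z} on H² (with symbol the complex conjugate of φ_z) equals the rank-one operator k_{z̄} ⊗ k_z, i.e., H_{φ̄_z} h = ⟨h, k_z⟩ k_{z̄} for all h ∈ H². -/

import Mathlib

noncomputable section

/- We model `L²(𝕋)` as an abstract complex Hilbert space `H` with Hilbert basis `b : ℤ → H`
(the exponentials `z^k`). `H²` is the closed span of `b k`, `k ≥ 0`, with Riesz projection `P`.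
The bilateral shift `W` satisfies `W (b k) = b (k+1)` and the flip `J` satisfies
`J (b k) = b (−k−1)`.  Since `φ_z ∈ H^∞`, multiplication by `φ_z = (w−z)/(1−z̄w)` on `L²` is the
operator `(W − z)(1 − z̄W)⁻¹`, and multiplication by `φ̄_z` is its adjoint.  The Hankel operator
with symbol `φ̄_z` is `h ↦ P(J(M_{φ̄_z} h))` on `H²`.  The normalized Szegő kernel is
`k_z = √(1−|z|²) ∑_{m≥0} z̄^m b m`. -/

noncomputable def hardy {H : Type*} [NormedAddCommGroup H] [InnerProductSpace ℂ H]
    [CompleteSpace H] (b : HilbertBasis ℤ ℂ H) : Submodule ℂ H :=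
  (Submodule.span ℂ (Set.range fun m : ℕ => b (m : ℤ))).topologicalClosure

noncomputable def hardyProj {H : Type*} [NormedAddCommGroup H] [InnerProductSpace ℂ H]
    [CompleteSpace H] (b : HilbertBasis ℤ ℂ H) : H →L[ℂ] H :=
  haveI : CompleteSpace (hardy b) :=
    (Submodule.isClosed_topologicalClosure _).completeSpace_coe
  (hardy b).subtypeL.comp (Submodule.orthogonalProjectionOnto (hardy b))

/-- The normalized Szegő kernel `k_z` in the basis `b`. -/
noncomputable def szego {H : Type*} [NormedAddCommGroup H] [InnerProductSpace ℂ H]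
    [CompleteSpace H] (b : HilbertBasis ℤ ℂ H) (z : ℂ) : H :=
  (Real.sqrt (1 - ‖z‖ ^ 2) : ℝ) •
    ∑' m : ℕ, (starRingEnd ℂ z) ^ m • b (m : ℤ)

/-- Multiplication by the Möbius function `φ_z(w) = (w−z)/(1−z̄w)` on `L²`. -/
noncomputable def mobiusMul {H : Type*} [NormedAddCommGroup H] [InnerProductSpace ℂ H]
    [CompleteSpace H] (W : H →L[ℂ] H) (z : ℂ) : H →L[ℂ] H :=
  (W - z • (1 : H →L[ℂ] H)) * Ring.inverse (1 - (starRingEnd ℂ z) • W)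

/-! Since `‖z‖ < 1`, the adjoint of `M_{φ_z}` is `(1 - z W*)⁻¹ (W* - z̄)`, and the Neumann series
gives `(1 - z W*)⁻¹ b k = ∑ zⁿ b (k - n)`. After the flip `J`, the Riesz projection keeps exactly
a shifted copy of `K = ∑ zⁿ b n = k_{z̄} / √(1 - |z|²)`, so `H_{φ̄_z} (b m) = zᵐ K - z̄ zᵐ⁺¹ K
= (1 - |z|²) zᵐ K`, which is also `⟨b m, k_z⟩ k_{z̄}`. Both sides are continuous and linear, and
`H²` is the closed span of the `b m`, `m ≥ 0`. -/

open ContinuousLinearMap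
open scoped InnerProductSpace ComplexConjugate

namespace HilbertBasis

variable {ι 𝕜 E F : Type*} [RCLike 𝕜] [NormedAddCommGroup E] [InnerProductSpace 𝕜 E]
  (b : HilbertBasis ι 𝕜 E)

theorem ext_inner {x y : E} (h : ∀ i, ⟪b i, x⟫_𝕜 = ⟪b i, y⟫_𝕜) : x = y :=
  b.repr.injective <| lp.ext <| funext fun i => by simp only [b.repr_apply_apply, h]

theorem continuousLinearMap_ext [NormedAddCommGroup F] [NormedSpace 𝕜 F] {f g : E →L[𝕜] F}
    (h : ∀ i, f (b i) = g (b i)) : f = g := by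
  refine ext fun x => eqOn_closure_span (s := Set.range b)
    (by rintro _ ⟨i, rfl⟩; exact h i) ?_
  rw [← Submodule.topologicalClosure_coe, b.dense_span]
  trivial

theorem adjoint_apply_of_apply_eq [CompleteSpace E] {T : E →L[𝕜] E} (e : ι ≃ ι)
    (hT : ∀ i, T (b i) = b (e i)) (i : ι) : adjoint T (b i) = b (e.symm i) := by
  classical
  refine b.ext_inner fun j => ?_
  rw [adjoint_inner_right, hT, orthonormal_iff_ite.mp b.orthonormal,
    orthonormal_iff_ite.mp b.orthonormal, e.eq_symm_apply]

end HilbertBasis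

theorem Orthonormal.summable_pow_smul {ι 𝕜 E : Type*} [RCLike 𝕜] [NormedAddCommGroup E]
    [InnerProductSpace 𝕜 E] [CompleteSpace E] {v : ι → E} (hv : Orthonormal 𝕜 v) (g : ℕ → ι)
    {z : 𝕜} (hz : ‖z‖ < 1) : Summable fun n => z ^ n • v (g n) :=
  Summable.of_norm <| by
    simpa [norm_smul, hv.1] using summable_geometric_of_lt_one (norm_nonneg z) hz

theorem Orthonormal.inner_left_tsum_smul {ι 𝕜 E : Type*} [RCLike 𝕜] [NormedAddCommGroup E]
    [InnerProductSpace 𝕜 E] {v : ι → E} (hv : Orthonormal 𝕜 v) {c : ι → 𝕜}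
    (hc : Summable fun j => c j • v j) (i : ι) : ⟪v i, ∑' j, c j • v j⟫_𝕜 = c i := by
  classical
  rw [← innerSL_apply_apply, ContinuousLinearMap.map_tsum _ hc]
  simp [orthonormal_iff_ite.mp hv]

theorem ContinuousLinearMap.inverse_one_sub_apply {𝕜 E : Type*} [NontriviallyNormedField 𝕜]
    [NormedAddCommGroup E] [NormedSpace 𝕜 E] [CompleteSpace E] {T : E →L[𝕜] E} (hT : ‖T‖ < 1)
    (x : E) : Ring.inverse (1 - T) x = ∑' n, (T ^ n) x :=
  ((hasSum_geom_series_inverse T hT).mapL (apply 𝕜 E x)).tsum_eq.symm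

section Hardy

variable {H : Type*} [NormedAddCommGroup H] [InnerProductSpace ℂ H] [CompleteSpace H]
  (b : HilbertBasis ℤ ℂ H)

instance : CompleteSpace (hardy b) :=
  (Submodule.isClosed_topologicalClosure _).completeSpace_coe

theorem hardyProj_eq_starProjection : hardyProj b = (hardy b).starProjection := rfl

theorem basis_mem_hardy (m : ℕ) : b m ∈ hardy b :=
  Submodule.le_topologicalClosure _ (Submodule.subset_span ⟨m, rfl⟩)

theorem basis_mem_hardy_orthogonal {k : ℤ} (hk : k < 0) : b k ∈ (hardy b)ᗮ := by
  classical
  have hle : hardy b ≤ (ℂ ∙ b k)ᗮ := by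
    refine Submodule.topologicalClosure_minimal _ ?_ (Submodule.isClosed_orthogonal _)
    rw [Submodule.span_le]
    rintro _ ⟨m, rfl⟩
    rw [SetLike.mem_coe, Submodule.mem_orthogonal_singleton_iff_inner_right,
      orthonormal_iff_ite.mp b.orthonormal, if_neg (by omega)]
  exact Submodule.isOrtho_iff_le.mp
    (Submodule.isOrtho_comm.mp (Submodule.isOrtho_iff_le.mpr hle))
    (Submodule.mem_span_singleton_self _)

theorem hardyProj_apply_basis (k : ℤ) : hardyProj b (b k) = if 0 ≤ k then b k else 0 := by
  rw [hardyProj_eq_starProjection]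
  split_ifs with hk
  · lift k to ℕ using hk
    exact Submodule.starProjection_eq_self_iff.mpr (basis_mem_hardy b k)
  · exact (hardy b).starProjection_apply_eq_zero_iff.mpr
      (basis_mem_hardy_orthogonal b (by omega))

theorem hardyProj_tsum_pow_smul_basis_sub {z : ℂ} (hz : ‖z‖ < 1) (m : ℕ) :
    hardyProj b (∑' n : ℕ, z ^ n • b (n - m)) = z ^ m • ∑' n : ℕ, z ^ n • b n := by
  rw [ContinuousLinearMap.map_tsum _ (b.orthonormal.summable_pow_smul _ hz),
    ← (b.orthonormal.summable_pow_smul _ hz).tsum_const_smul]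
  refine ((add_left_injective m).tsum_eq fun n hn => ?_).symm.trans (tsum_congr fun j => ?_)
  · by_contra hnm
    refine hn ?_
    dsimp only
    rw [map_smul, hardyProj_apply_basis, if_neg fun h => hnm ⟨n - m, by dsimp only; omega⟩,
      smul_zero]
  · rw [map_smul, hardyProj_apply_basis, if_pos (by omega), smul_smul, ← pow_add, add_comm]
    push_cast
    rw [add_sub_cancel_left]

end Hardy

theorem adjoint_mobiusMul {H : Type*} [NormedAddCommGroup H] [InnerProductSpace ℂ H]
    [CompleteSpace H] (W : H →L[ℂ] H) (z : ℂ) :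
    adjoint (mobiusMul W z) = Ring.inverse (1 - z • adjoint W) * (adjoint W - conj z • 1) := by
  simp only [← star_eq_adjoint, mobiusMul, star_mul, ← Ring.inverse_star, star_sub, star_smul,
    star_one, starRingEnd_apply, star_star]

section Shift

variable {H : Type*} [NormedAddCommGroup H] [InnerProductSpace ℂ H] [CompleteSpace H]
  {b : HilbertBasis ℤ ℂ H} {W : H →L[ℂ] H} (hW : ∀ k : ℤ, W (b k) = b (k + 1))
include hW

theorem adjoint_shift_apply_basis (k : ℤ) : adjoint W (b k) = b (k - 1) := by
  simpa [sub_eq_add_neg] using b.adjoint_apply_of_apply_eq (Equiv.addRight 1) hW k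

theorem adjoint_shift_pow_apply_basis (n : ℕ) (k : ℤ) : (adjoint W ^ n) (b k) = b (k - n) := by
  induction n with
  | zero => simp
  | succ n ih =>
    rw [pow_succ', mul_apply_eq_comp, ih, adjoint_shift_apply_basis hW]
    push_cast
    ring_nf

theorem norm_adjoint_shift_le_one : ‖adjoint W‖ ≤ 1 := by
  have hiso : ∀ x, ‖adjoint W x‖ = ‖x‖ := by
    refine (norm_map_iff_adjoint_comp_self _).mpr (b.continuousLinearMap_ext fun k => ?_)
    rw [adjoint_adjoint, comp_apply, adjoint_shift_apply_basis hW, hW, sub_add_cancel,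
      one_apply_eq_self]
  exact opNorm_le_bound _ zero_le_one fun x => (hiso x).trans_le (one_mul _).ge

theorem inverse_one_sub_smul_adjoint_shift_apply_basis {z : ℂ} (hz : ‖z‖ < 1) (k : ℤ) :
    Ring.inverse (1 - z • adjoint W) (b k) = ∑' n : ℕ, z ^ n • b (k - n) := by
  have hnorm : ‖z • adjoint W‖ < 1 :=
    (norm_smul_le _ _).trans_lt
      (by nlinarith [norm_nonneg z, norm_nonneg (adjoint W), norm_adjoint_shift_le_one hW])
  simp only [inverse_one_sub_apply hnorm, smul_pow, smul_apply, adjoint_shift_pow_apply_basis hW]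

end Shift

section Kernel

variable {H : Type*} [NormedAddCommGroup H] [InnerProductSpace ℂ H] [CompleteSpace H]
  (b : HilbertBasis ℤ ℂ H) {z : ℂ}

theorem inner_szego_basis (hz : ‖z‖ < 1) (m : ℕ) :
    ⟪szego b z, b m⟫_ℂ = √(1 - ‖z‖ ^ 2) * z ^ m := by
  have hsum := b.orthonormal.summable_pow_smul Nat.cast (z := conj z) (by simpa using hz)
  have hinner : ⟪b m, ∑' n : ℕ, conj z ^ n • b n⟫_ℂ = conj z ^ m :=
    (b.orthonormal.comp _ Nat.cast_injective).inner_left_tsum_smul hsum m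
  rw [← inner_conj_symm, szego, ← Complex.coe_smul, inner_smul_right, hinner]
  simp

theorem szego_conj : szego b (conj z) = (√(1 - ‖z‖ ^ 2) : ℝ) • ∑' n : ℕ, z ^ n • b n := by
  simp [szego]

theorem inner_szego_basis_smul_szego_conj (hz : ‖z‖ < 1) (m : ℕ) :
    ⟪szego b z, b m⟫_ℂ • szego b (conj z) =
      (z ^ m * (1 - conj z * z)) • ∑' n : ℕ, z ^ n • b n := by
  have hsq : (√(1 - ‖z‖ ^ 2) : ℂ) * √(1 - ‖z‖ ^ 2) = 1 - conj z * z := by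
    rw [← Complex.ofReal_mul, Real.mul_self_sqrt (by nlinarith [norm_nonneg z]), mul_comm,
      Complex.mul_conj, Complex.normSq_eq_norm_sq]
    push_cast
    ring
  rw [inner_szego_basis b hz, szego_conj, ← Complex.coe_smul, smul_smul, ← hsq]
  ring_nf

end Kernel

theorem hankel_mobiusMul_apply_basis {H : Type*} [NormedAddCommGroup H] [InnerProductSpace ℂ H]
    [CompleteSpace H] {b : HilbertBasis ℤ ℂ H} {W J : H →L[ℂ] H}
    (hW : ∀ k : ℤ, W (b k) = b (k + 1)) (hJ : ∀ k : ℤ, J (b k) = b (-k - 1))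
    {z : ℂ} (hz : ‖z‖ < 1) (m : ℕ) :
    hardyProj b (J (adjoint (mobiusMul W z) (b m))) =
      (z ^ m * (1 - conj z * z)) • ∑' n : ℕ, z ^ n • b n := by
  have hflip (k : ℕ) :
      hardyProj b (J (Ring.inverse (1 - z • adjoint W) (b (k - 1)))) =
        z ^ k • ∑' n : ℕ, z ^ n • b n := by
    rw [inverse_one_sub_smul_adjoint_shift_apply_basis hW hz,
      ContinuousLinearMap.map_tsum _ (b.orthonormal.summable_pow_smul _ hz),
      ← hardyProj_tsum_pow_smul_basis_sub b hz k]
    congr 1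
    refine tsum_congr fun n => ?_
    rw [map_smul, hJ]
    ring_nf
  have hflip_succ := hflip (m + 1)
  push_cast at hflip_succ
  rw [add_sub_cancel_right] at hflip_succ
  rw [adjoint_mobiusMul, mul_apply_eq_comp, sub_apply, smul_apply, one_apply_eq_self,
    adjoint_shift_apply_basis hW, map_sub, map_smul, map_sub, map_smul, map_sub, map_smul,
    hflip, hflip_succ, smul_smul, ← sub_smul]
  ring_nf

theorem stmt11 {H : Type*} [NormedAddCommGroup H] [InnerProductSpace ℂ H] [CompleteSpace H]
    (b : HilbertBasis ℤ ℂ H) (W J : H →L[ℂ] H)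
    (hW : ∀ k : ℤ, W (b k) = b (k + 1))
    (hJ : ∀ k : ℤ, J (b k) = b (-k - 1))
    (z : ℂ) (hz : ‖z‖ < 1) :
    ∀ h ∈ hardy b,
      hardyProj b (J (ContinuousLinearMap.adjoint (mobiusMul W z) h)) =
        (inner ℂ (szego b z) h : ℂ) • szego b (starRingEnd ℂ z) := by
  have hbasis : Set.EqOn (hardyProj b ∘L J ∘L adjoint (mobiusMul W z))
      ((innerSL ℂ (szego b z)).smulRight (szego b (conj z))) (Set.range fun m : ℕ => b m) := by
    rintro _ ⟨m, rfl⟩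
    simp only [comp_apply, smulRight_apply, innerSL_apply_apply]
    rw [hankel_mobiusMul_apply_basis hW hJ hz, inner_szego_basis_smul_szego_conj b hz]
  intro h hh
  exact eqOn_closure_span hbasis hh
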